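/- (Key computation for Theorem 3.3.) Let λ ∈ ℂ with λ_i = Im λ > 0, let g ∈ H, and define f(s) = e^{−i \overline{λ} s} exp(isA) g for s ≥ b, where \overline{λ} is the complex conjugate of λ. Then ∫_b^{∞} ‖f(s)‖² ds = e^{−2λ_i b} ‖g‖² / (2λ_i), and the function u(t) = i ∫_t^{∞} e^{−iλ(t−s)} exp(i(t−s)A) f(s) ds satisfies ∫_b^{∞} ‖u(t)‖² dt = e^{−2λ_i b} ‖g‖² / (8 λ_i³). Consequently, if g ≠ 0 then ‖u‖_{L²([b,∞);H)} = (1/(2λ_i)) ‖f‖_{L²([b,∞);H)}; in particular the resolvent of the extension has operator norm at least 1/(2 Im λ) at every λ with Im λ > 0. -/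

import Mathlib

open MeasureTheory Set Complex
open scoped InnerProductSpace

/-- The operator exponential `exp(iτA)` for a bounded operator `A` and `τ ∈ ℝ`. -/
noncomputable def expIA {H : Type*} [NormedAddCommGroup H] [InnerProductSpace ℂ H]
    [CompleteSpace H] (A : H →L[ℂ] H) (τ : ℝ) : H →L[ℂ] H :=
  NormedSpace.exp ((Complex.I * (τ : ℂ)) • A)

/-!
`exp(isA)` is a unitary group, so `‖f(s)‖ = e^{-λ_i s} ‖g‖`, and in the integrand of `u(t)` the
operator factors combine to `exp(itA) g`, independent of `s`. What remains of the integrand is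
`e^{-iλt} e^{-2λ_i s}`, whose integral over `s > t` is `e^{-i conj(λ) t} / (2λ_i)`. Hence
`u = (i / (2λ_i)) • f` pointwise, and both integrals and the norm identity follow.
-/

lemma norm_cexp_neg_I_mul_conj_mul (lam : ℂ) (s : ℝ) :
    ‖Complex.exp (-I * (starRingEnd ℂ) lam * s)‖ = Real.exp (-lam.im * s) := by
  rw [Complex.norm_exp]
  congr 1
  simp

lemma cexp_neg_I_mul_sub_mul_cexp_neg_I_conj_mul (lam : ℂ) (t s : ℝ) :
    Complex.exp (-I * lam * (t - s)) * Complex.exp (-I * (starRingEnd ℂ) lam * s)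
      = Complex.exp (-I * lam * t) * Complex.exp (-(2 * lam.im : ℂ) * s) := by
  rw [← Complex.exp_add, ← Complex.exp_add]
  congr 1
  apply Complex.ext <;> simp <;> ring

lemma cexp_neg_I_mul_mul_cexp_neg_two_im_mul (lam : ℂ) (t : ℝ) :
    Complex.exp (-I * lam * t) * Complex.exp (-(2 * lam.im : ℂ) * t)
      = Complex.exp (-I * (starRingEnd ℂ) lam * t) := by
  rw [← Complex.exp_add]
  congr 1
  apply Complex.ext <;> simp
  ring

section expIA

variable {H : Type*} [NormedAddCommGroup H] [InnerProductSpace ℂ H] [CompleteSpace H]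

lemma expIA_mem_unitary {A : H →L[ℂ] H} (hA : IsSelfAdjoint A) (τ : ℝ) :
    expIA A τ ∈ unitary (H →L[ℂ] H) := by
  -- the `NormedSpace.exp` API asks for a `ℚ`-algebra structure, which is not found by inference
  let +nondep : NormedAlgebra ℚ (H →L[ℂ] H) := NormedAlgebra.restrictScalars ℚ ℂ _
  apply NormedSpace.exp_mem_unitary_of_mem_skewAdjoint
  rw [skewAdjoint.mem_iff, star_smul, hA.star_eq, ← neg_smul]
  congr 1
  simp

lemma norm_expIA_apply {A : H →L[ℂ] H} (hA : IsSelfAdjoint A) (τ : ℝ) (x : H) :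
    ‖expIA A τ x‖ = ‖x‖ :=
  ContinuousLinearMap.norm_map_of_mem_unitary (expIA_mem_unitary hA τ) x

lemma expIA_add (A : H →L[ℂ] H) (σ τ : ℝ) : expIA A (σ + τ) = expIA A σ * expIA A τ := by
  let +nondep : NormedAlgebra ℚ (H →L[ℂ] H) := NormedAlgebra.restrictScalars ℚ ℂ _
  rw [expIA, expIA, expIA,
    ← NormedSpace.exp_add_of_commute (((Commute.refl A).smul_left _).smul_right _),
    Complex.ofReal_add, mul_add, add_smul]

lemma expIA_sub_apply_expIA (A : H →L[ℂ] H) (t s : ℝ) (x : H) :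
    expIA A (t - s) (expIA A s x) = expIA A t x := by
  rw [← mul_apply_eq_comp, ← expIA_add, sub_add_cancel]

lemma norm_cexp_smul_expIA_apply {A : H →L[ℂ] H} (hA : IsSelfAdjoint A) (lam : ℂ) (g : H)
    (s : ℝ) :
    ‖Complex.exp (-I * (starRingEnd ℂ) lam * s) • expIA A s g‖ = Real.exp (-lam.im * s) * ‖g‖ := by
  rw [norm_smul, norm_cexp_neg_I_mul_conj_mul, norm_expIA_apply hA]

lemma integral_Ioi_sq_norm_cexp_smul_expIA_apply {A : H →L[ℂ] H} (hA : IsSelfAdjoint A)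
    {lam : ℂ} (hlam : 0 < lam.im) (g : H) (b : ℝ) :
    ∫ s in Ioi b, ‖Complex.exp (-I * (starRingEnd ℂ) lam * s) • expIA A s g‖ ^ 2
      = Real.exp (-2 * lam.im * b) * ‖g‖ ^ 2 / (2 * lam.im) := by
  have hsq (s : ℝ) :
      (Real.exp (-lam.im * s) * ‖g‖) ^ 2 = Real.exp (-2 * lam.im * s) * ‖g‖ ^ 2 := by
    rw [mul_pow, ← Real.exp_nat_mul]
    ring_nf
  simp only [norm_cexp_smul_expIA_apply hA, hsq, integral_mul_const,
    integral_exp_mul_Ioi (by linarith : -2 * lam.im < 0)]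
  field_simp

lemma integral_Ioi_resolvent_kernel (A : H →L[ℂ] H) {lam : ℂ} (hlam : 0 < lam.im) (g : H)
    (t : ℝ) :
    ∫ s in Ioi t, Complex.exp (-I * lam * (t - s)) •
        expIA A (t - s) (Complex.exp (-I * (starRingEnd ℂ) lam * s) • expIA A s g)
      = (1 / (2 * lam.im : ℂ)) • Complex.exp (-I * (starRingEnd ℂ) lam * t) • expIA A t g := by
  have hint : ∫ s in Ioi t, Complex.exp (-(2 * lam.im : ℂ) * s)
      = Complex.exp (-(2 * lam.im : ℂ) * t) / (2 * lam.im : ℂ) := by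
    rw [integral_exp_mul_complex_Ioi (by simpa using hlam), neg_div_neg_eq]
  simp only [map_smul, expIA_sub_apply_expIA, smul_smul,
    cexp_neg_I_mul_sub_mul_cexp_neg_I_conj_mul, integral_smul_const, integral_const_mul, hint]
  rw [← cexp_neg_I_mul_mul_cexp_neg_two_im_mul]
  ring_nf

end expIA

/-- Key computation for Theorem 3.3: with `f(s) = e^{−i conj(λ) s} exp(isA) g` and
`u(t) = i ∫_t^∞ e^{−iλ(t−s)} exp(i(t−s)A) f(s) ds` one has
`∫_b^∞ ‖f‖² = e^{−2 Im λ b}‖g‖²/(2 Im λ)`, `∫_b^∞ ‖u‖² = e^{−2 Im λ b}‖g‖²/(8 (Im λ)³)`,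
hence `‖u‖_{L²} = (1/(2 Im λ)) ‖f‖_{L²}` when `g ≠ 0`, so the resolvent has norm
at least `1/(2 Im λ)`. -/
theorem resolvent_lower_bound_computation
    {H : Type*} [NormedAddCommGroup H] [InnerProductSpace ℂ H] [CompleteSpace H]
    (A : H →L[ℂ] H) (hA : IsSelfAdjoint A) (b : ℝ) (lam : ℂ) (hlam : 0 < lam.im)
    (g : H) (f u : ℝ → H)
    (hf : f = fun s : ℝ =>
      Complex.exp (-Complex.I * (starRingEnd ℂ) lam * (s : ℂ)) • (expIA A s) g)
    (hu : u = fun t : ℝ => Complex.I • ∫ s in Set.Ioi t,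
      Complex.exp (-Complex.I * lam * ((t : ℂ) - (s : ℂ))) • (expIA A (t - s)) (f s)) :
    (∫ s in Set.Ioi b, ‖f s‖ ^ 2) = Real.exp (-2 * lam.im * b) * ‖g‖ ^ 2 / (2 * lam.im)
    ∧ (∫ t in Set.Ioi b, ‖u t‖ ^ 2) = Real.exp (-2 * lam.im * b) * ‖g‖ ^ 2 / (8 * lam.im ^ 3)
    ∧ (g ≠ 0 →
        eLpNorm u 2 (volume.restrict (Set.Ici b))
          = ENNReal.ofReal (1 / (2 * lam.im)) * eLpNorm f 2 (volume.restrict (Set.Ici b))) := by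
  have hu_eq : u = (I / (2 * lam.im : ℂ)) • f := by
    subst hf hu
    funext t
    simp only [Pi.smul_apply, integral_Ioi_resolvent_kernel A hlam, smul_smul]
    ring_nf
  have hnorm : ‖I / (2 * lam.im : ℂ)‖ = 1 / (2 * lam.im) := by
    rw [norm_div, Complex.norm_I, ← Complex.ofReal_ofNat, ← Complex.ofReal_mul, Complex.norm_real,
      Real.norm_of_nonneg (by positivity)]
  have hf_int : ∫ s in Ioi b, ‖f s‖ ^ 2 = Real.exp (-2 * lam.im * b) * ‖g‖ ^ 2 / (2 * lam.im) := by
    subst hf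
    exact integral_Ioi_sq_norm_cexp_smul_expIA_apply hA hlam g b
  refine ⟨hf_int, ?_, fun _ => ?_⟩
  · simp only [hu_eq, Pi.smul_apply, norm_smul, hnorm, mul_pow, integral_const_mul, hf_int]
    field_simp
    ring
  · rw [hu_eq, eLpNorm_const_smul, ← ofReal_norm, hnorm]
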